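/- Let X be a real Banach space whose dual space X* is separable, let G ⊆ X be an open set and let f : G → ℝ be a Lipschitz function. Let A be the set of all points x ∈ G such that f is Fréchet superdifferentiable at x and f is not Fréchet differentiable at x. Then A is σ-upper porous. -/

import Mathlib

open Metric Filter Set Topology TopologicalSpace NNReal ENNReal

/-- `porosityGamma A x R` is the supremum of all radii `r ≥ 0` for which there exists `z`
with the open ball `U(z,r)` contained in `U(x,R) \ A`. -/
noncomputable def porosityGamma {X : Type*} [MetricSpace X] (A : Set X) (x : X) (R : ℝ) :
    ℝ≥0∞ :=
  ⨆ (r : ℝ≥0) (_ : ∃ z : X, Metric.ball z (r : ℝ) ⊆ Metric.ball x R \ A), (r : ℝ≥0∞)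

/-- `A` is upper porous at `x` if `limsup_{R→0+} γ(x,R,A)/R > 0`. -/
def UpperPorousAt {X : Type*} [MetricSpace X] (A : Set X) (x : X) : Prop :=
  0 < Filter.limsup (fun R : ℝ => porosityGamma A x R / ENNReal.ofReal R) (𝓝[>] (0 : ℝ))

/-- `A` is upper porous if it is upper porous at each of its points. -/
def UpperPorous {X : Type*} [MetricSpace X] (A : Set X) : Prop :=
  ∀ x ∈ A, UpperPorousAt A x

/-- `A` is σ-upper porous if it is a countable union of upper porous sets. -/
def SigmaUpperPorous {X : Type*} [MetricSpace X] (A : Set X) : Prop :=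
  ∃ B : ℕ → Set X, (∀ n, UpperPorous (B n)) ∧ A = ⋃ n, B n

/-- `f` is Fréchet superdifferentiable at `x` if there is a continuous linear functional `φ`
with `limsup_{v→0} (f (x+v) - f x - φ v)/‖v‖ ≤ 0`. -/
def FrechetSuperdiffAt {X : Type*} [NormedAddCommGroup X] [NormedSpace ℝ X]
    (f : X → ℝ) (x : X) : Prop :=
  ∃ φ : X →L[ℝ] ℝ,
    Filter.limsup (fun v : X => (f (x + v) - f x - φ v) / ‖v‖) (𝓝[≠] (0 : X)) ≤ 0

/-!
Fix a dense sequence `u` in `X*`. If `φ` is a superdifferential of `f` at `x` but not a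
derivative, then `f` drops below `φ` with some slope `c > 0` along arbitrarily short vectors `v`,
while a nearby `u m` is still a `c / 4`-approximate superdifferential on a whole ball around `x`.
So `x` lies in one of countably many sets `superdiffDropSet G f (u m) c δ`, and each of these is
upper porous: if `x` belongs to it and `v` is a drop vector, no point `y` within `κ ‖v‖` of
`x + v` belongs to it, because the approximate superdifferential inequality at `y` tested at `x`,
the drop from `x` to `x + v` and the Lipschitz bound between `x + v` and `y` add up to a
contradiction once `κ` is small compared to `c / (K + ‖φ‖)`.
-/

section Porosity

variable {X : Type*} [MetricSpace X]

lemma ofReal_le_porosityGamma {A : Set X} {x z : X} {R r : ℝ} (hr : 0 ≤ r)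
    (h : ball z r ⊆ ball x R \ A) : ENNReal.ofReal r ≤ porosityGamma A x R :=
  le_iSup₂_of_le r.toNNReal ⟨z, by rwa [Real.coe_toNNReal r hr]⟩ le_rfl

lemma porosityGamma_anti {A B : Set X} (hAB : A ⊆ B) (x : X) (R : ℝ) :
    porosityGamma B x R ≤ porosityGamma A x R :=
  iSup₂_mono' fun r ⟨z, hz⟩ => ⟨r, ⟨z, hz.trans (sdiff_subset_sdiff_right hAB)⟩, le_rfl⟩

lemma UpperPorous.mono {A B : Set X} (hB : UpperPorous B) (hAB : A ⊆ B) : UpperPorous A :=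
  fun x hx => (hB x (hAB hx)).trans_le <| limsup_le_limsup <| .of_forall fun R =>
    ENNReal.div_le_div_right (porosityGamma_anti hAB x R) _

lemma upperPorousAt_of_frequently_ball_subset {A : Set X} {x : X} {κ : ℝ} (hκ : 0 < κ)
    (h : ∃ᶠ R in 𝓝[>] (0 : ℝ), ∃ z, ball z (κ * R) ⊆ ball x R \ A) : UpperPorousAt A x := by
  refine (ENNReal.ofReal_pos.2 hκ).trans_le (le_limsup_of_frequently_le ?_)
  refine (h.and_eventually self_mem_nhdsWithin).mono fun R ⟨⟨z, hz⟩, hR⟩ => ?_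
  rw [ENNReal.le_div_iff_mul_le (.inl (ENNReal.ofReal_pos.2 hR).ne') (.inl ENNReal.ofReal_ne_top),
    ← ENNReal.ofReal_mul hκ.le]
  exact ofReal_le_porosityGamma (mul_pos hκ hR).le hz

lemma SigmaUpperPorous.of_subset_iUnion {ι : Type*} [Countable ι] {A : Set X} {B : ι → Set X}
    (hB : ∀ i, UpperPorous (B i)) (hA : A ⊆ ⋃ i, B i) : SigmaUpperPorous A := by
  cases isEmpty_or_nonempty ι with
  | inl _ =>
    refine ⟨fun _ => ∅, fun _ x hx => hx.elim, ?_⟩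
    simpa using hA
  | inr _ =>
    obtain ⟨e, he⟩ := exists_surjective_nat ι
    refine ⟨fun n => A ∩ B (e n), fun n => (hB (e n)).mono inter_subset_right, ?_⟩
    rw [← inter_iUnion, he.iUnion_comp B]
    exact (inter_eq_left.2 hA).symm

end Porosity

lemma Filter.Eventually.nhds_of_nhdsNE {α : Type*} [TopologicalSpace α] {a : α} {p : α → Prop}
    (h : ∀ᶠ y in 𝓝[≠] a, p y) (ha : p a) : ∀ᶠ y in 𝓝 a, p y := by
  rw [← nhdsNE_sup_pure]
  exact eventually_sup.2 ⟨h, ha⟩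

/-- In `ℝ` the `limsup` of a function that is not bounded above is the junk value `0`, so `hr`
alone says nothing. -/
lemma eventually_le_mul_norm_of_limsup_div_norm_le {E : Type*} [NormedAddCommGroup E]
    {r : E → ℝ} {C ε : ℝ} (hC : ∀ᶠ v in 𝓝[≠] 0, r v ≤ C * ‖v‖)
    (hr : limsup (fun v => r v / ‖v‖) (𝓝[≠] 0) ≤ 0) (hε : 0 < ε) :
    ∀ᶠ v in 𝓝[≠] (0 : E), r v ≤ ε * ‖v‖ := by
  have hpos : ∀ᶠ v in 𝓝[≠] (0 : E), 0 < ‖v‖ :=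
    eventually_mem_nhdsWithin.mono fun v hv => norm_pos_iff.2 hv
  have hbdd : IsBoundedUnder (· ≤ ·) (𝓝[≠] 0) (fun v => r v / ‖v‖) :=
    ⟨C, eventually_map.2 ((hC.and hpos).mono fun v ⟨h, hv⟩ => (div_le_iff₀ hv).2 h)⟩
  filter_upwards [eventually_lt_of_limsup_lt (hr.trans_lt hε) hbdd, hpos] with v h hv
  exact ((div_lt_iff₀ hv).1 h).le

section Superdifferential

variable {X : Type*} [NormedAddCommGroup X] [NormedSpace ℝ X]

def superdiffDropSet (G : Set X) (f : X → ℝ) (φ : StrongDual ℝ X) (c δ : ℝ) : Set X :=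
  {x | ball x δ ⊆ G ∧
    (∀ v : X, ‖v‖ < δ → f (x + v) - f x - φ v ≤ c / 4 * ‖v‖) ∧
    ∃ᶠ v in 𝓝[≠] (0 : X), f (x + v) - f x - φ v ≤ -c * ‖v‖}

variable {G : Set X} {f : X → ℝ} {K : ℝ≥0}

lemma ball_subset_ball_diff_superdiffDropSet (hf : LipschitzOnWith K f G)
    {φ : StrongDual ℝ X} {c δ κ : ℝ} (hc : 0 < c) (hκ1 : κ ≤ 1) (hκ : (K + ‖φ‖) * κ ≤ c / 4)
    {x v : X} (hxG : ball x δ ⊆ G) (hv : v ≠ 0) (hvδ : ‖v‖ < δ / 2)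
    (hdrop : f (x + v) - f x - φ v ≤ -c * ‖v‖) :
    ball (x + v) (κ * ‖v‖) ⊆ ball x (2 * ‖v‖) \ superdiffDropSet G f φ c δ := by
  intro y hy
  rw [mem_ball] at hy
  have hyx : dist y x < 2 * ‖v‖ := calc
    dist y x ≤ dist y (x + v) + dist (x + v) x := dist_triangle _ _ _
    _ < κ * ‖v‖ + ‖v‖ := by rw [dist_eq_norm (x + v), add_sub_cancel_left]; gcongr
    _ ≤ 2 * ‖v‖ := by nlinarith [norm_nonneg v]
  refine ⟨hyx, fun ⟨_, hy_sup, _⟩ => ?_⟩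
  have hvpos : 0 < ‖v‖ := norm_pos_iff.2 hv
  have h_sup : f x - f y - φ (x - y) ≤ c / 4 * ‖x - y‖ := by
    simpa using hy_sup (x - y) (by rw [← dist_eq_norm, dist_comm]; linarith)
  have h_lip : f y - f (x + v) ≤ K * (κ * ‖v‖) := by
    have hxvG : x + v ∈ G := hxG (by rw [mem_ball, dist_eq_norm, add_sub_cancel_left]; linarith)
    linarith [hf.le_add_mul (hxG (by rw [mem_ball]; linarith)) hxvG,
      mul_le_mul_of_nonneg_left hy.le K.coe_nonneg]
  have h_φ : φ (x + v - y) ≤ ‖φ‖ * (κ * ‖v‖) := by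
    refine (Real.le_norm_self _).trans ((φ.le_opNorm _).trans ?_)
    gcongr
    rw [← dist_eq_norm, dist_comm]
    exact hy.le
  have h_lin : φ (x - y) = φ (x + v - y) - φ v := by rw [← map_sub]; congr 1; abel
  have h_xy : c / 4 * ‖x - y‖ ≤ c / 4 * (2 * ‖v‖) := by
    gcongr; rw [← dist_eq_norm, dist_comm]; exact hyx.le
  linarith [mul_le_mul_of_nonneg_right hκ hvpos.le, mul_pos hc hvpos]

lemma upperPorous_superdiffDropSet (hf : LipschitzOnWith K f G) (φ : StrongDual ℝ X)
    {c δ : ℝ} (hc : 0 < c) (hδ : 0 < δ) : UpperPorous (superdiffDropSet G f φ c δ) := by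
  rintro x ⟨hxG, -, hdrop⟩
  set κ := min 1 (c / 4 / (K + ‖φ‖ + 1))
  have hκ0 : 0 < κ := by positivity
  have hκ : (K + ‖φ‖) * κ ≤ c / 4 := calc
    (K + ‖φ‖) * κ ≤ (K + ‖φ‖ + 1) * (c / 4 / (K + ‖φ‖ + 1)) :=
      mul_le_mul (by linarith) (min_le_right _ _) hκ0.le (by positivity)
    _ = c / 4 := mul_div_cancel₀ _ (by positivity)
  have hsmall : ∀ᶠ v in 𝓝[≠] (0 : X), v ≠ 0 ∧ ‖v‖ < δ / 2 :=
    eventually_mem_nhdsWithin.and (mem_nhdsWithin_of_mem_nhds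
      (by simpa only [ball_zero_eq] using ball_mem_nhds (0 : X) (half_pos hδ)))
  have hR : Tendsto (fun v : X => 2 * ‖v‖) (𝓝[≠] 0) (𝓝[>] 0) := by
    simpa using TendstoNhdsWithinIoi.const_mul two_pos tendsto_norm_nhdsNE_zero
  refine upperPorousAt_of_frequently_ball_subset (half_pos hκ0) (hR.frequently ?_)
  refine (hdrop.and_eventually hsmall).mono fun v ⟨hv_drop, hv0, hvδ⟩ => ⟨x + v, ?_⟩
  rw [show κ / 2 * (2 * ‖v‖) = κ * ‖v‖ by ring]
  exact ball_subset_ball_diff_superdiffDropSet hf hc (min_le_left _ _) hκ hxG hv0 hvδ hv_drop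

lemma LipschitzOnWith.eventually_sub_sub_le (hf : LipschitzOnWith K f G) {x : X} (hG : G ∈ 𝓝 x)
    (φ : StrongDual ℝ X) : ∀ᶠ v in 𝓝 (0 : X), f (x + v) - f x - φ v ≤ (K + ‖φ‖) * ‖v‖ := by
  filter_upwards [((continuous_const_add x).tendsto' 0 x (add_zero x)).eventually_mem hG] with v hv
  have hlip := hf.le_add_mul hv (mem_of_mem_nhds hG)
  rw [dist_eq_norm, add_sub_cancel_left] at hlip
  linarith [(neg_le_abs (φ v)).trans (φ.le_opNorm v)]

lemma exists_frequently_le_neg_mul_norm {x : X} {φ : StrongDual ℝ X}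
    (hup : ∀ ε > 0, ∀ᶠ v in 𝓝[≠] (0 : X), f (x + v) - f x - φ v ≤ ε * ‖v‖)
    (hφ : ¬ HasFDerivAt f φ x) :
    ∃ c > 0, ∃ᶠ v in 𝓝[≠] (0 : X), f (x + v) - f x - φ v ≤ -c * ‖v‖ := by
  by_contra! hlow
  refine hφ (hasFDerivAt_iff_isLittleO_nhds_zero.2 (Asymptotics.isLittleO_iff.2 fun ε hε => ?_))
  refine Eventually.nhds_of_nhdsNE (((hup ε hε).and (hlow ε hε)).mono fun v ⟨h₁, h₂⟩ => ?_) (by simp)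
  rw [Real.norm_eq_abs, abs_le]
  constructor <;> linarith

lemma mem_superdiffDropSet_of_norm_sub_le {φ ψ : StrongDual ℝ X} {c δ : ℝ} {x : X}
    (hψ : ‖φ - ψ‖ ≤ c / 8) (hxG : ball x δ ⊆ G)
    (hup : ∀ v : X, ‖v‖ < δ → f (x + v) - f x - φ v ≤ c / 8 * ‖v‖)
    (hdrop : ∃ᶠ v in 𝓝[≠] (0 : X), f (x + v) - f x - φ v ≤ -(2 * c) * ‖v‖) :
    x ∈ superdiffDropSet G f ψ c δ := by
  have hc : 0 ≤ c := by linarith [norm_nonneg (φ - ψ)]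
  have hclose (v : X) : φ v - ψ v ≤ c / 8 * ‖v‖ := calc
    φ v - ψ v ≤ ‖φ - ψ‖ * ‖v‖ := (Real.le_norm_self _).trans ((φ - ψ).le_opNorm v)
    _ ≤ c / 8 * ‖v‖ := by gcongr
  refine ⟨hxG, fun v hv => ?_, hdrop.mono fun v hv => ?_⟩
  · linarith [hup v hv, hclose v]
  · nlinarith [hclose v, mul_nonneg hc (norm_nonneg v)]

lemma exists_mem_superdiffDropSet (hG : IsOpen G) (hf : LipschitzOnWith K f G)
    {u : ℕ → StrongDual ℝ X} (hu : DenseRange u) {x : X} (hxG : x ∈ G)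
    (hsd : FrechetSuperdiffAt f x) (hnd : ¬ DifferentiableAt ℝ f x) :
    ∃ m p q : ℕ, x ∈ superdiffDropSet G f (u m) (1 / (p + 1)) (1 / (q + 1)) := by
  obtain ⟨φ, hφ⟩ := hsd
  have hup (ε : ℝ) (hε : 0 < ε) : ∀ᶠ v in 𝓝[≠] (0 : X), f (x + v) - f x - φ v ≤ ε * ‖v‖ :=
    eventually_le_mul_norm_of_limsup_div_norm_le
      (nhdsWithin_le_nhds (hf.eventually_sub_sub_le (hG.mem_nhds hxG) φ)) hφ hε
  obtain ⟨c₀, hc₀, hdrop⟩ := exists_frequently_le_neg_mul_norm hup fun h => hnd h.differentiableAt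
  obtain ⟨p, hp⟩ := exists_nat_one_div_lt (half_pos hc₀)
  set c : ℝ := 1 / (p + 1)
  have hc : 0 < c := by positivity
  obtain ⟨m, hm⟩ := Metric.denseRange_iff.1 hu φ (c / 8) (by positivity)
  have hnear : ∀ᶠ v in 𝓝 (0 : X), x + v ∈ G ∧ f (x + v) - f x - φ v ≤ c / 8 * ‖v‖ :=
    (((continuous_const_add x).tendsto' 0 x (add_zero x)).eventually_mem (hG.mem_nhds hxG)).and
      ((hup _ (by positivity)).nhds_of_nhdsNE (by simp))
  obtain ⟨δ, hδ, hδnear⟩ := Metric.eventually_nhds_iff_ball.1 hnear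
  obtain ⟨q, hq⟩ := exists_nat_one_div_lt hδ
  refine ⟨m, p, q, mem_superdiffDropSet_of_norm_sub_le (dist_eq_norm φ (u m) ▸ hm.le)
    (fun y hy => ?_) (fun v hv => (hδnear v ?_).2) (hdrop.mono fun v hv => ?_)⟩
  · simpa using (hδnear (y - x) (by simpa [dist_eq_norm] using hy.trans hq)).1
  · simpa using hv.trans hq
  · nlinarith [norm_nonneg v]

end Superdifferential

theorem sigmaUpperPorous_superdiff_not_diff_of_separable_dual_general
    {X : Type*} [NormedAddCommGroup X] [NormedSpace ℝ X]
    (hsep : TopologicalSpace.SeparableSpace (StrongDual ℝ X))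
    (G : Set X) (hG : IsOpen G) (f : X → ℝ) (hf : ∃ K : ℝ≥0, LipschitzOnWith K f G) :
    SigmaUpperPorous
      {x : X | x ∈ G ∧ FrechetSuperdiffAt f x ∧ ¬ DifferentiableAt ℝ f x} := by
  obtain ⟨K, hf⟩ := hf
  obtain ⟨u, hu⟩ := exists_dense_seq (StrongDual ℝ X)
  refine SigmaUpperPorous.of_subset_iUnion (ι := ℕ × ℕ × ℕ)
    (fun i => upperPorous_superdiffDropSet hf (u i.1) (c := 1 / (i.2.1 + 1))
      (δ := 1 / (i.2.2 + 1)) (by positivity) (by positivity)) ?_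
  rintro x ⟨hxG, hsd, hnd⟩
  obtain ⟨m, p, q, hx⟩ := exists_mem_superdiffDropSet hG hf hu hxG hsd hnd
  exact mem_iUnion.2 ⟨(m, p, q), hx⟩

/-- Zajíček's theorem: for a Lipschitz function on an open subset of a Banach space with
separable dual, the set of points of Fréchet superdifferentiability but not Fréchet
differentiability is σ-upper porous. -/
theorem sigmaUpperPorous_superdiff_not_diff_of_separable_dual
    {X : Type*} [NormedAddCommGroup X] [NormedSpace ℝ X] [CompleteSpace X]
    (hsep : TopologicalSpace.SeparableSpace (StrongDual ℝ X))
    (G : Set X) (hG : IsOpen G) (f : X → ℝ) (hf : ∃ K : ℝ≥0, LipschitzOnWith K f G) :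
    SigmaUpperPorous
      {x : X | x ∈ G ∧ FrechetSuperdiffAt f x ∧ ¬ DifferentiableAt ℝ f x} :=
  sigmaUpperPorous_superdiff_not_diff_of_separable_dual_general hsep G hG f hf
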